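/- Let C = A·B be an algebra factorisation in the category of H-modules, F a counital 2-cocycle on H, and V an (H,B)-module. Then the induced module Ind_{B_F}^{C_F}(V_F) is isomorphic as a C_F-module to the Giaquinto–Zhang twist (Ind_B^C(V))_F, and the two C_F-module structures on the underlying vector space A⊗V are intertwined by the map F⁻¹▷ : A⊗V → A⊗V. -/

import Mathlib

open TensorProduct LinearMap

noncomputable section

variable (k : Type) [Field k]
variable (H : Type) [Ring H] [HopfAlgebra k H]

/-- `F`, with inverse `Finv`, is a counital 2-cocycle on the Hopf algebra `H`:
`(F⊗1)·(Δ⊗id)(F) = (1⊗F)·(id⊗Δ)(F)` and `(ε⊗id)(F) = 1 = (id⊗ε)(F)`. -/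
def IsCocycle (F Finv : H ⊗[k] H) : Prop :=
  F * Finv = 1 ∧ Finv * F = 1 ∧
  (F ⊗ₜ[k] (1 : H)) * (TensorProduct.map Coalgebra.comul LinearMap.id F) =
    (TensorProduct.assoc k H H H).symm
      (((1 : H) ⊗ₜ[k] F) * (TensorProduct.map LinearMap.id Coalgebra.comul F)) ∧
  TensorProduct.map Coalgebra.counit LinearMap.id F = 1 ∧
  TensorProduct.map LinearMap.id Coalgebra.counit F = 1

/-- A (left) module-algebra structure of a Hopf algebra `H` on an algebra `A`:
`A` is an algebra object in the category of `H`-modules. -/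
structure ModuleAlgebra (A : Type) [Ring A] [Algebra k A] where
  act : H →ₗ[k] Module.End k A
  act_one : act 1 = 1
  act_mul : ∀ g h : H, act (g * h) = act g * act h
  act_algebra_unit : ∀ h : H, act h (1 : A) = (Coalgebra.counit h : k) • (1 : A)
  act_algebra_mul : ∀ (h : H) (a b : A),
    act h (a * b) = LinearMap.mul' k A
      ((TensorProduct.homTensorHomMap (RingHom.id k) A A A A
        (TensorProduct.map act act (Coalgebra.comul h))) (a ⊗ₜ[k] b))

variable {k H}

/-- The operator on `A ⊗ B` obtained by letting an element `x ∈ H ⊗ H` act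
legwise through the actions `actA`, `actB`. -/
def legAct {A B : Type} [AddCommGroup A] [Module k A] [AddCommGroup B] [Module k B]
    (actA : H →ₗ[k] Module.End k A) (actB : H →ₗ[k] Module.End k B) (x : H ⊗[k] H) :
    A ⊗[k] B →ₗ[k] A ⊗[k] B :=
  TensorProduct.homTensorHomMap (RingHom.id k) A B A B (TensorProduct.map actA actB x)

/-- The twisted product `m_F = m ∘ (F⁻¹ ▷ −)` on `A`. -/
def twistedMul {A : Type} [Ring A] [Algebra k A] (ma : ModuleAlgebra k H A)
    (Finv : H ⊗[k] H) : A ⊗[k] A →ₗ[k] A :=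
  LinearMap.mul' k A ∘ₗ legAct ma.act ma.act Finv

/-- The twisted coproduct `Δ_F(h) = F·Δ(h)·F⁻¹`. -/
def twistedComul (F Finv : H ⊗[k] H) : H →ₗ[k] H ⊗[k] H :=
  LinearMap.mulLeft k F ∘ₗ LinearMap.mulRight k Finv ∘ₗ Coalgebra.comul


/-- A representation of a `k`-algebra `A` on a `k`-vector space `V`. -/
structure AlgRep (A : Type) [Ring A] [Algebra k A] (V : Type) [AddCommGroup V] [Module k V] where
  ρ : A →ₗ[k] Module.End k V
  ρ_one : ρ 1 = 1
  ρ_mul : ∀ a b : A, ρ (a * b) = ρ a * ρ b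

/-- `V` is an `(H,A)`-module: the `A`-action is a morphism of `H`-modules, i.e.
`h ▷ (a ▷_A v) = (h₍₁₎ ▷ a) ▷_A (h₍₂₎ ▷ v)`. -/
def IsHAModule {A V : Type} [Ring A] [Algebra k A] [AddCommGroup V] [Module k V]
    (ma : ModuleAlgebra k H A) (ρA : AlgRep (k := k) A V) (ρH : AlgRep (k := k) H V) : Prop :=
  ∀ (h : H) (a : A) (v : V),
    ρH.ρ h (ρA.ρ a v) =
      TensorProduct.lift ρA.ρ (legAct ma.act ρH.ρ (Coalgebra.comul h) (a ⊗ₜ[k] v))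

/-- The Giaquinto–Zhang twisted action `▷_F = ▷_A ∘ (F⁻¹ ▷ −)` of `A_F` on `V`. -/
def twistedAct {A V : Type} [Ring A] [Algebra k A] [AddCommGroup V] [Module k V]
    (ma : ModuleAlgebra k H A) (ρA : AlgRep (k := k) A V) (ρH : AlgRep (k := k) H V)
    (Finv : H ⊗[k] H) : A →ₗ[k] Module.End k V :=
  TensorProduct.curry (TensorProduct.lift ρA.ρ ∘ₗ legAct ma.act ρH.ρ Finv)

/-- Generic smash-product multiplication on `A ⊗ H`, for a multiplication `μA` on `A`,
comultiplication `δ` and multiplication `μH` on `H`, and action `actUn : H ⊗ A → A`: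
`(a # h)(b # g) = a·(h₍₁₎ ▷ b) # h₍₂₎·g`. -/
def smashMulMap {A : Type} [AddCommGroup A] [Module k A]
    (μA : A ⊗[k] A →ₗ[k] A) (δ : H →ₗ[k] H ⊗[k] H) (μH : H ⊗[k] H →ₗ[k] H)
    (actUn : H ⊗[k] A →ₗ[k] A) :
    (A ⊗[k] H) ⊗[k] (A ⊗[k] H) →ₗ[k] A ⊗[k] H :=
  TensorProduct.map μA LinearMap.id
    ∘ₗ (TensorProduct.assoc k A A H).symm.toLinearMap
    ∘ₗ (TensorProduct.map LinearMap.id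
          ((TensorProduct.map actUn μH)
            ∘ₗ (TensorProduct.tensorTensorTensorComm k H H A H).toLinearMap))
    ∘ₗ (TensorProduct.assoc k A (H ⊗[k] H) (A ⊗[k] H)).toLinearMap
    ∘ₗ TensorProduct.map (TensorProduct.map LinearMap.id δ) LinearMap.id

/-- The adjoint (strongly inner) action `h ▷ a = u(h₍₁₎)·a·u(S(h₍₂₎))` of `H` on `A`,
along an algebra homomorphism `u : H → A`. -/
def adjointAction {A : Type} [Ring A] [Algebra k A] (u : H →ₐ[k] A) :
    H →ₗ[k] Module.End k A :=
  LinearMap.mul' k (Module.End k A)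
    ∘ₗ TensorProduct.map (LinearMap.mul k A ∘ₗ u.toLinearMap)
        ((LinearMap.mul k A).flip ∘ₗ u.toLinearMap ∘ₗ HopfAlgebra.antipode (R := k))
    ∘ₗ Coalgebra.comul

/-- The Kulish–Mudrov map `η : A_F → A`, `a ↦ (f' ▷ a)·u(f'')` with `F⁻¹ = f' ⊗ f''`. -/
def kulishMudrovEta {A : Type} [Ring A] [Algebra k A] (ma : ModuleAlgebra k H A)
    (u : H →ₐ[k] A) (Finv : H ⊗[k] H) : A →ₗ[k] A :=
  LinearMap.mul' k A
    ∘ₗ TensorProduct.map (TensorProduct.lift ma.act) u.toLinearMap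
    ∘ₗ (TensorProduct.assoc k H A H).symm.toLinearMap
    ∘ₗ TensorProduct.map LinearMap.id (TensorProduct.comm k H A).toLinearMap
    ∘ₗ (TensorProduct.assoc k H H A).toLinearMap
    ∘ₗ TensorProduct.mk k (H ⊗[k] H) A Finv

/-- The multiplication map of `C` restricted to `A ⊗ B` along the inclusions. -/
def resMul {C A B : Type} [Ring C] [Algebra k C] [AddCommGroup A] [Module k A]
    [AddCommGroup B] [Module k B] (ιA : A →ₗ[k] C) (ιB : B →ₗ[k] C) :
    A ⊗[k] B →ₗ[k] C :=
  LinearMap.mul' k C ∘ₗ TensorProduct.map ιA ιB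

/-- The action of `C = A·B` on the induced module `Ind_B^C(V) ≅ A ⊗ V`, built from the
inverse `μinv` of the factorisation isomorphism, the generalised braiding `Ψ`, the
multiplication `μA` of `A` and the `B`-action on `V`. -/
def inducedAction {C A B V : Type} [AddCommGroup C] [Module k C] [AddCommGroup A]
    [Module k A] [AddCommGroup B] [Module k B] [AddCommGroup V] [Module k V]
    (μinv : C →ₗ[k] A ⊗[k] B) (Ψm : B ⊗[k] A →ₗ[k] A ⊗[k] B)
    (μA : A ⊗[k] A →ₗ[k] A) (actBV : B ⊗[k] V →ₗ[k] V) :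
    C ⊗[k] (A ⊗[k] V) →ₗ[k] A ⊗[k] V :=
  TensorProduct.map μA actBV
    ∘ₗ (TensorProduct.assoc k A A (B ⊗[k] V)).symm.toLinearMap
    ∘ₗ TensorProduct.map LinearMap.id
         ((TensorProduct.assoc k A B V).toLinearMap
           ∘ₗ TensorProduct.map Ψm LinearMap.id
           ∘ₗ (TensorProduct.assoc k B A V).symm.toLinearMap)
    ∘ₗ (TensorProduct.assoc k A B (A ⊗[k] V)).toLinearMap
    ∘ₗ TensorProduct.map μinv LinearMap.id

/-- The diagonal action of `H` on a tensor product of two `H`-modules. -/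
def diagAct {A V : Type} [AddCommGroup A] [Module k A] [AddCommGroup V] [Module k V]
    (actA : H →ₗ[k] Module.End k A) (actV : H →ₗ[k] Module.End k V) :
    H →ₗ[k] Module.End k (A ⊗[k] V) :=
  TensorProduct.homTensorHomMap (RingHom.id k) A V A V ∘ₗ TensorProduct.map actA actV ∘ₗ Coalgebra.comul

/-!
Elements of `H ⊗ H` and `H ⊗ H ⊗ H` act legwise and multiplicatively on tensor products. In any
factorisation the induced action of `c` on `a ⊗ v` is `μ⁻¹(c·a)` acting on `v` through its
`B`-leg; for the twisted factorisation this needs associativity of `C_F`, i.e. the cocycle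
identity. Since `μ_F = μ ∘ (F⁻¹ ▷)`, we have `μ_F⁻¹ = (F ▷) ∘ μ⁻¹`. On the twisted side `F⁻¹ ▷`
moves past the `B`-action by the `(H,B)`-module property, picking up `(id ⊗ Δ)F⁻¹`; on the
untwisted side the diagonal action of `F⁻¹` on `C ⊗ (A ⊗ V)` is `(id ⊗ Δ)F⁻¹·(1 ⊗ F⁻¹)`, and
`μ⁻¹` is `H`-equivariant. The inverted cocycle identity
`(Δ ⊗ id)F⁻¹·(F⁻¹ ⊗ 1) = (id ⊗ Δ)F⁻¹·(1 ⊗ F⁻¹)` turns both sides into `(Δ ⊗ id)F⁻¹` acting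
on `μ⁻¹(c ·_F a) ⊗ v`, followed by the `B`-action.
-/

namespace ModuleAlgebra

variable {A : Type} [Ring A] [Algebra k A] (ma : ModuleAlgebra k H A)

def actHom : H →ₐ[k] Module.End k A :=
  AlgHom.ofLinearMap ma.act ma.act_one ma.act_mul

end ModuleAlgebra

namespace AlgRep

variable {A V : Type} [Ring A] [Algebra k A] [AddCommGroup V] [Module k V]

def toAlgHom (ρ : AlgRep (k := k) A V) : A →ₐ[k] Module.End k V :=
  AlgHom.ofLinearMap ρ.ρ ρ.ρ_one ρ.ρ_mul

end AlgRep

section LegAction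

variable {R S T M N P M' N' : Type} [Ring R] [Algebra k R] [Ring S] [Algebra k S]
  [Ring T] [Algebra k T] [AddCommGroup M] [Module k M] [AddCommGroup N] [Module k N]
  [AddCommGroup P] [Module k P] [AddCommGroup M'] [Module k M'] [AddCommGroup N'] [Module k N']

/-- `legAct`, bundled as an algebra homomorphism and for arbitrary tensor factors. -/
def legHom (f : R →ₐ[k] Module.End k M) (g : S →ₐ[k] Module.End k N) :
    R ⊗[k] S →ₐ[k] Module.End k (M ⊗[k] N) :=
  Module.endTensorEndAlgHom.comp (Algebra.TensorProduct.map f g)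

variable (f : R →ₐ[k] Module.End k M) (g : S →ₐ[k] Module.End k N)
  (h : T →ₐ[k] Module.End k P)

@[simp]
theorem legHom_tmul (r : R) (s : S) : legHom f g (r ⊗ₜ s) = TensorProduct.map (f r) (g s) :=
  rfl

theorem legHom_tmul_one (r : R) : legHom f g (r ⊗ₜ 1) = rTensor N (f r) := by
  rw [legHom_tmul, map_one]
  rfl

theorem legHom_one_tmul (s : S) : legHom f g (1 ⊗ₜ s) = lTensor M (g s) := by
  rw [legHom_tmul, map_one]
  rfl

theorem legHom_comp_right {S' : Type} [Ring S'] [Algebra k S'] (δ : S' →ₐ[k] S) :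
    legHom f (g.comp δ) = (legHom f g).comp (Algebra.TensorProduct.map (AlgHom.id k R) δ) := by
  rw [legHom, legHom, AlgHom.comp_assoc, ← Algebra.TensorProduct.map_comp, AlgHom.comp_id]

theorem legHom_comp_left {R' : Type} [Ring R'] [Algebra k R'] (δ : R' →ₐ[k] R) :
    legHom (f.comp δ) g = (legHom f g).comp (Algebra.TensorProduct.map δ (AlgHom.id k S)) := by
  rw [legHom, legHom, AlgHom.comp_assoc, ← Algebra.TensorProduct.map_comp, AlgHom.comp_id]

theorem map_legHom {f' : R →ₐ[k] Module.End k M'} {g' : S →ₐ[k] Module.End k N'}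
    {φ : M →ₗ[k] M'} {ψ : N →ₗ[k] N'} (hφ : ∀ r m, φ (f r m) = f' r (φ m))
    (hψ : ∀ s n, ψ (g s n) = g' s (ψ n)) (x : R ⊗[k] S) (y : M ⊗[k] N) :
    TensorProduct.map φ ψ (legHom f g x y) = legHom f' g' x (TensorProduct.map φ ψ y) := by
  induction x using TensorProduct.induction_on with
  | zero => simp
  | add x₁ x₂ h₁ h₂ => simp only [map_add, LinearMap.add_apply, h₁, h₂]
  | tmul r s =>
    induction y using TensorProduct.induction_on with
    | zero => simp
    | add y₁ y₂ h₁ h₂ => simp only [map_add, h₁, h₂]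
    | tmul m n => simp [hφ, hψ]

theorem assoc_legHom_legHom (W : (R ⊗[k] S) ⊗[k] T) (y : (M ⊗[k] N) ⊗[k] P) :
    TensorProduct.assoc k M N P (legHom (legHom f g) h W y) =
      legHom f (legHom g h) (Algebra.TensorProduct.assoc k k k R S T W)
        (TensorProduct.assoc k M N P y) := by
  induction W using TensorProduct.induction_on with
  | zero => simp
  | add W₁ W₂ h₁ h₂ => simp only [map_add, LinearMap.add_apply, h₁, h₂]
  | tmul w t =>
    induction w using TensorProduct.induction_on with
    | zero => simp
    | add w₁ w₂ h₁ h₂ => simp only [add_tmul, map_add, LinearMap.add_apply, h₁, h₂]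
    | tmul r s =>
      induction y using TensorProduct.induction_on with
      | zero => simp
      | add y₁ y₂ h₁ h₂ => simp only [map_add, h₁, h₂]
      | tmul z p =>
        induction z using TensorProduct.induction_on with
        | zero => simp
        | add z₁ z₂ h₁ h₂ => simp only [add_tmul, map_add, h₁, h₂]
        | tmul m n => simp

theorem legHom_bijective {x y : R ⊗[k] S} (hxy : x * y = 1) (hyx : y * x = 1) :
    Function.Bijective (legHom f g y) :=
  (Module.End.isUnit_iff _).mp
    (IsUnit.map (legHom f g) (⟨⟨y, x, hyx, hxy⟩, rfl⟩ : IsUnit y))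

theorem legAct_eq_legHom {A V : Type} [Ring A] [Algebra k A] [AddCommGroup V] [Module k V]
    (ma : ModuleAlgebra k H A) (ρ : AlgRep (k := k) H V) (x : H ⊗[k] H) :
    legAct ma.act ρ.ρ x = legHom ma.actHom ρ.toAlgHom x :=
  rfl

end LegAction

namespace IsCocycle

variable {F Finv : H ⊗[k] H}

/-- The two sides are the inverses of the two sides of the cocycle identity. -/
theorem map_comul_id_inv_mul (hF : IsCocycle k H F Finv) :
    Algebra.TensorProduct.map (Bialgebra.comulAlgHom k H) (AlgHom.id k H) Finv * (Finv ⊗ₜ 1) =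
      (Algebra.TensorProduct.assoc k k k H H H).symm
        (Algebra.TensorProduct.map (AlgHom.id k H) (Bialgebra.comulAlgHom k H) Finv *
          (1 ⊗ₜ Finv)) := by
  obtain ⟨hFFinv, hFinvF, hcocycle, -, -⟩ := hF
  set Δl := Algebra.TensorProduct.map (Bialgebra.comulAlgHom k H) (AlgHom.id k H)
  set Δr := Algebra.TensorProduct.map (AlgHom.id k H) (Bialgebra.comulAlgHom k H)
  set α := (Algebra.TensorProduct.assoc k k k H H H).symm
  have hX : (F ⊗ₜ[k] (1 : H)) * Δl F * (Δl Finv * (Finv ⊗ₜ 1)) = 1 := by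
    rw [mul_assoc, ← mul_assoc (Δl F), ← map_mul, hFFinv, map_one, one_mul,
      Algebra.TensorProduct.tmul_mul_tmul, hFFinv, one_mul]
    rfl
  have hY : α (Δr Finv * (1 ⊗ₜ Finv)) * ((F ⊗ₜ[k] (1 : H)) * Δl F) = 1 := by
    rw [show (F ⊗ₜ[k] (1 : H)) * Δl F = α ((1 ⊗ₜ F) * Δr F) from hcocycle, ← map_mul,
      mul_assoc, ← mul_assoc (1 ⊗ₜ Finv), Algebra.TensorProduct.tmul_mul_tmul, hFinvF,
      one_mul, ← Algebra.TensorProduct.one_def, one_mul, ← map_mul, hFinvF, map_one, map_one]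
  exact (left_inv_eq_right_inv hY hX).symm

theorem map_comul_id_inv_eq (hF : IsCocycle k H F Finv) :
    (Algebra.TensorProduct.assoc k k k H H H).symm
        (Algebra.TensorProduct.map (AlgHom.id k H) (Bialgebra.comulAlgHom k H) Finv) *
      ((Algebra.TensorProduct.assoc k k k H H H).symm (1 ⊗ₜ Finv) * (F ⊗ₜ 1)) =
      Algebra.TensorProduct.map (Bialgebra.comulAlgHom k H) (AlgHom.id k H) Finv := by
  rw [← mul_assoc, ← map_mul, ← hF.map_comul_id_inv_mul, mul_assoc,
    Algebra.TensorProduct.tmul_mul_tmul, hF.2.1, one_mul, ← Algebra.TensorProduct.one_def,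
    mul_one]

end IsCocycle

theorem mul'_lTensor_mul'_assoc {A : Type} [Ring A] [Algebra k A] (t : (A ⊗[k] A) ⊗[k] A) :
    mul' k A (lTensor A (mul' k A) (TensorProduct.assoc k A A A t)) =
      mul' k A (rTensor A (mul' k A) t) := by
  have : mul' k A ∘ₗ lTensor A (mul' k A) ∘ₗ (TensorProduct.assoc k A A A).toLinearMap =
      mul' k A ∘ₗ rTensor A (mul' k A) :=
    TensorProduct.ext_threefold fun x y z => by simp [mul_assoc]
  exact LinearMap.congr_fun this t

namespace ModuleAlgebra

variable {A : Type} [Ring A] [Algebra k A] (ma : ModuleAlgebra k H A)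

theorem mul'_legHom_comul (h : H) (u : A ⊗[k] A) :
    mul' k A (legHom ma.actHom ma.actHom (Coalgebra.comul h) u) = ma.act h (mul' k A u) := by
  induction u using TensorProduct.induction_on with
  | zero => simp
  | add u₁ u₂ h₁ h₂ => simp only [map_add, h₁, h₂]
  | tmul x y => rw [mul'_apply, ma.act_algebra_mul]; rfl

theorem twistedMul_eq (Finv : H ⊗[k] H) (u : A ⊗[k] A) :
    twistedMul ma Finv u = mul' k A (legHom ma.actHom ma.actHom Finv u) :=
  rfl

theorem legHom_rTensor_mul' (x : H ⊗[k] H) (t : (A ⊗[k] A) ⊗[k] A) :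
    legHom ma.actHom ma.actHom x (rTensor A (mul' k A) t) =
      rTensor A (mul' k A) (legHom (legHom ma.actHom ma.actHom) ma.actHom
        (Algebra.TensorProduct.map (Bialgebra.comulAlgHom k H) (AlgHom.id k H) x) t) := by
  rw [← AlgHom.comp_apply, ← legHom_comp_left]
  exact (map_legHom _ _ (fun h u => ma.mul'_legHom_comul h u) (fun _ _ => rfl) x t).symm

theorem legHom_lTensor_mul' (x : H ⊗[k] H) (t : A ⊗[k] (A ⊗[k] A)) :
    legHom ma.actHom ma.actHom x (lTensor A (mul' k A) t) =
      lTensor A (mul' k A) (legHom ma.actHom (legHom ma.actHom ma.actHom)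
        (Algebra.TensorProduct.map (AlgHom.id k H) (Bialgebra.comulAlgHom k H) x) t) := by
  rw [← AlgHom.comp_apply, ← legHom_comp_right]
  exact (map_legHom _ _ (fun _ _ => rfl) (fun h u => ma.mul'_legHom_comul h u) x t).symm

theorem twistedMul_twistedMul_tmul (Finv : H ⊗[k] H) (x y z : A) :
    twistedMul ma Finv (twistedMul ma Finv (x ⊗ₜ y) ⊗ₜ z) =
      mul' k A (rTensor A (mul' k A) (legHom (legHom ma.actHom ma.actHom) ma.actHom
        (Algebra.TensorProduct.map (Bialgebra.comulAlgHom k H) (AlgHom.id k H) Finv *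
          (Finv ⊗ₜ 1)) ((x ⊗ₜ y) ⊗ₜ z))) := by
  rw [map_mul, Module.End.mul_apply, legHom_tmul_one, rTensor_tmul, ← legHom_rTensor_mul']
  rfl

theorem twistedMul_tmul_twistedMul (Finv : H ⊗[k] H) (x y z : A) :
    twistedMul ma Finv (x ⊗ₜ twistedMul ma Finv (y ⊗ₜ z)) =
      mul' k A (lTensor A (mul' k A) (legHom ma.actHom (legHom ma.actHom ma.actHom)
        (Algebra.TensorProduct.map (AlgHom.id k H) (Bialgebra.comulAlgHom k H) Finv *
          (1 ⊗ₜ Finv)) (x ⊗ₜ (y ⊗ₜ z)))) := by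
  rw [map_mul, Module.End.mul_apply, legHom_one_tmul, lTensor_tmul, ← legHom_lTensor_mul']
  rfl

theorem twistedMul_assoc {F Finv : H ⊗[k] H} (hF : IsCocycle k H F Finv) (x y z : A) :
    twistedMul ma Finv (twistedMul ma Finv (x ⊗ₜ y) ⊗ₜ z) =
      twistedMul ma Finv (x ⊗ₜ twistedMul ma Finv (y ⊗ₜ z)) := by
  rw [twistedMul_twistedMul_tmul, twistedMul_tmul_twistedMul, ← mul'_lTensor_mul'_assoc,
    assoc_legHom_legHom, hF.map_comul_id_inv_mul, AlgEquiv.apply_symm_apply]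
  rfl

end ModuleAlgebra

section LTensorAssoc

variable {R S T M N P P' : Type} [Ring R] [Algebra k R] [Ring S] [Algebra k S]
  [Ring T] [Algebra k T] [AddCommGroup M] [Module k M] [AddCommGroup N] [Module k N]
  [AddCommGroup P] [Module k P] [AddCommGroup P'] [Module k P']

def lTensorAssoc (ρ' : N ⊗[k] P →ₗ[k] P') : (M ⊗[k] N) ⊗[k] P →ₗ[k] M ⊗[k] P' :=
  lTensor M ρ' ∘ₗ (TensorProduct.assoc k M N P).toLinearMap

@[simp]
theorem lTensorAssoc_tmul (ρ' : N ⊗[k] P →ₗ[k] P') (m : M) (n : N) (p : P) :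
    lTensorAssoc ρ' ((m ⊗ₜ n) ⊗ₜ p) = m ⊗ₜ ρ' (n ⊗ₜ p) :=
  rfl

variable (f : R →ₐ[k] Module.End k M) (g : S →ₐ[k] Module.End k N)
  (h : T →ₐ[k] Module.End k P)

theorem lTensorAssoc_comp_legHom (ρ' : N ⊗[k] P →ₗ[k] P') (y : S ⊗[k] T)
    (t : (M ⊗[k] N) ⊗[k] P) :
    lTensorAssoc (ρ' ∘ₗ legHom g h y) t =
      lTensorAssoc ρ' (legHom (legHom f g) h
        ((Algebra.TensorProduct.assoc k k k R S T).symm (1 ⊗ₜ y)) t) := by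
  simp only [lTensorAssoc, LinearMap.comp_apply, LinearEquiv.coe_coe]
  rw [assoc_legHom_legHom, AlgEquiv.apply_symm_apply, legHom_one_tmul, lTensor_comp_apply]

theorem legHom_lTensorAssoc {T' : Type} [Ring T'] [Algebra k T']
    {h' : T' →ₐ[k] Module.End k P'} {δ : T' →ₐ[k] S ⊗[k] T} {ρ' : N ⊗[k] P →ₗ[k] P'}
    (hρ : ∀ s n, ρ' (legHom g h (δ s) n) = h' s (ρ' n)) (x : R ⊗[k] T')
    (t : (M ⊗[k] N) ⊗[k] P) :
    legHom f h' x (lTensorAssoc ρ' t) =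
      lTensorAssoc ρ' (legHom (legHom f g) h
        ((Algebra.TensorProduct.assoc k k k R S T).symm
          (Algebra.TensorProduct.map (AlgHom.id k R) δ x)) t) := by
  simp only [lTensorAssoc, LinearMap.comp_apply, LinearEquiv.coe_coe]
  rw [assoc_legHom_legHom, AlgEquiv.apply_symm_apply, ← AlgHom.comp_apply, ← legHom_comp_right]
  exact (map_legHom _ _ (fun _ _ => rfl) hρ x _).symm

end LTensorAssoc

section InducedModule

variable {C A B V : Type} [AddCommGroup C] [Module k C] [AddCommGroup A] [Module k A]
  [AddCommGroup B] [Module k B] [AddCommGroup V] [Module k V]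

theorem map_assoc_symm_tmul_assoc (mA : A ⊗[k] A →ₗ[k] A) (ρ' : B ⊗[k] V →ₗ[k] V)
    (a₀ : A) (z : A ⊗[k] B) (v : V) :
    TensorProduct.map mA ρ' ((TensorProduct.assoc k A A (B ⊗[k] V)).symm
        (a₀ ⊗ₜ TensorProduct.assoc k A B V (z ⊗ₜ v))) =
      lTensorAssoc ρ' (rTensor B (mA ∘ₗ TensorProduct.mk k A A a₀) z ⊗ₜ v) := by
  induction z using TensorProduct.induction_on with
  | zero => simp
  | add z₁ z₂ h₁ h₂ => simp only [add_tmul, map_add, tmul_add, h₁, h₂]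
  | tmul a b => simp

variable {mC : C ⊗[k] C →ₗ[k] C} {mA : A ⊗[k] A →ₗ[k] A} {iA : A →ₗ[k] C}
  {iB : B →ₗ[k] C}

theorem rTensor_ofBijective_symm
    (hassoc : ∀ x y z, mC (mC (x ⊗ₜ y) ⊗ₜ z) = mC (x ⊗ₜ mC (y ⊗ₜ z)))
    (hiA : ∀ a a', mC (iA a ⊗ₜ iA a') = iA (mA (a ⊗ₜ a')))
    (hbij : Function.Bijective (mC ∘ₗ TensorProduct.map iA iB)) (a₀ : A) (w : C) :
    rTensor B (mA ∘ₗ TensorProduct.mk k A A a₀) ((LinearEquiv.ofBijective _ hbij).symm w) =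
      (LinearEquiv.ofBijective _ hbij).symm (mC (iA a₀ ⊗ₜ w)) := by
  set e := LinearEquiv.ofBijective _ hbij
  rw [LinearEquiv.eq_symm_apply]
  conv_rhs => rw [← e.apply_symm_apply w]
  generalize e.symm w = z
  induction z using TensorProduct.induction_on with
  | zero => simp
  | add z₁ z₂ h₁ h₂ => simp only [map_add, tmul_add, h₁, h₂]
  | tmul a b =>
    change mC (iA (mA (a₀ ⊗ₜ a)) ⊗ₜ iB b) = mC (iA a₀ ⊗ₜ mC (iA a ⊗ₜ iB b))
    rw [← hiA, hassoc]

/-- Writing `c = a₀·b₀`, this is associativity: `a₀·(b₀·a) = c·a`. -/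
theorem inducedAction_tmul_tmul (ρ' : B ⊗[k] V →ₗ[k] V)
    (hassoc : ∀ x y z, mC (mC (x ⊗ₜ y) ⊗ₜ z) = mC (x ⊗ₜ mC (y ⊗ₜ z)))
    (hiA : ∀ a a', mC (iA a ⊗ₜ iA a') = iA (mA (a ⊗ₜ a')))
    (hbij : Function.Bijective (mC ∘ₗ TensorProduct.map iA iB)) (c : C) (a : A) (v : V) :
    inducedAction (LinearEquiv.ofBijective _ hbij).symm.toLinearMap
        ((LinearEquiv.ofBijective _ hbij).symm.toLinearMap ∘ₗ
          (mC ∘ₗ TensorProduct.map iB iA))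
        mA ρ' (c ⊗ₜ (a ⊗ₜ v)) =
      lTensorAssoc ρ' ((LinearEquiv.ofBijective _ hbij).symm (mC (c ⊗ₜ iA a)) ⊗ₜ v) := by
  set e := LinearEquiv.ofBijective _ hbij
  obtain ⟨y, rfl⟩ := e.surjective c
  induction y using TensorProduct.induction_on with
  | zero => simp
  | add y₁ y₂ h₁ h₂ => simp only [map_add, add_tmul, h₁, h₂]
  | tmul a₀ b₀ =>
    simp only [inducedAction, LinearMap.comp_apply, map_tmul, LinearEquiv.coe_coe,
      LinearEquiv.symm_apply_apply, TensorProduct.assoc_tmul, TensorProduct.assoc_symm_tmul,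
      LinearMap.id_coe, id_eq]
    rw [map_assoc_symm_tmul_assoc, rTensor_ofBijective_symm hassoc hiA, ← hassoc]
    rfl

theorem inducedAction_assoc (ρ' : B ⊗[k] V →ₗ[k] V)
    (hassoc : ∀ x y z, mC (mC (x ⊗ₜ y) ⊗ₜ z) = mC (x ⊗ₜ mC (y ⊗ₜ z)))
    (hiA : ∀ a a', mC (iA a ⊗ₜ iA a') = iA (mA (a ⊗ₜ a')))
    (hbij : Function.Bijective (mC ∘ₗ TensorProduct.map iA iB)) (t : (C ⊗[k] A) ⊗[k] V) :
    inducedAction (LinearEquiv.ofBijective _ hbij).symm.toLinearMap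
        ((LinearEquiv.ofBijective _ hbij).symm.toLinearMap ∘ₗ
          (mC ∘ₗ TensorProduct.map iB iA))
        mA ρ' (TensorProduct.assoc k C A V t) =
      lTensorAssoc ρ' (rTensor V
        ((LinearEquiv.ofBijective _ hbij).symm.toLinearMap ∘ₗ mC ∘ₗ lTensor C iA) t) := by
  induction t using TensorProduct.induction_on with
  | zero => simp
  | add t₁ t₂ h₁ h₂ => simp only [map_add, h₁, h₂]
  | tmul u v =>
    induction u using TensorProduct.induction_on with
    | zero => simp
    | add u₁ u₂ h₁ h₂ => simp only [add_tmul, map_add, h₁, h₂]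
    | tmul c a => exact inducedAction_tmul_tmul ρ' hassoc hiA hbij c a v

end InducedModule

section HBModule

variable {A B V : Type} [Ring A] [Algebra k A] [Ring B] [Algebra k B] [AddCommGroup V]
  [Module k V] {maB : ModuleAlgebra k H B} {ρB : AlgRep (k := k) B V}
  {ρHV : AlgRep (k := k) H V}

theorem IsHAModule.lift_legHom_comul (hHB : IsHAModule maB ρB ρHV) (h : H) (n : B ⊗[k] V) :
    lift ρB.ρ (legHom maB.actHom ρHV.toAlgHom (Coalgebra.comul h) n) =
      ρHV.ρ h (lift ρB.ρ n) := by
  induction n using TensorProduct.induction_on with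
  | zero => simp
  | add n₁ n₂ h₁ h₂ => simp only [map_add, h₁, h₂]
  | tmul b v => exact (hHB h b v).symm

theorem legHom_lTensorAssoc_twisted (maA : ModuleAlgebra k H A) (hHB : IsHAModule maB ρB ρHV)
    {F Finv : H ⊗[k] H} (hF : IsCocycle k H F Finv) (z : A ⊗[k] B) (v : V) :
    legHom maA.actHom ρHV.toAlgHom Finv
        (lTensorAssoc (lift ρB.ρ ∘ₗ legAct maB.act ρHV.ρ Finv)
          (legHom maA.actHom maB.actHom F z ⊗ₜ v)) =
      lTensorAssoc (lift ρB.ρ) (legHom (legHom maA.actHom maB.actHom) ρHV.toAlgHom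
        (Algebra.TensorProduct.map (Bialgebra.comulAlgHom k H) (AlgHom.id k H) Finv)
        (z ⊗ₜ v)) := by
  have hF1 : legHom maA.actHom maB.actHom F z ⊗ₜ v =
      legHom (legHom maA.actHom maB.actHom) ρHV.toAlgHom (F ⊗ₜ 1) (z ⊗ₜ v) := by
    rw [legHom_tmul_one]
    rfl
  rw [hF1, legAct_eq_legHom, lTensorAssoc_comp_legHom maA.actHom,
    legHom_lTensorAssoc _ _ _ (δ := Bialgebra.comulAlgHom k H) hHB.lift_legHom_comul,
    ← Module.End.mul_apply, ← Module.End.mul_apply, ← map_mul, ← map_mul, mul_assoc,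
    hF.map_comul_id_inv_eq]

end HBModule

section Factorisation

variable {C A B V : Type} [Ring C] [Algebra k C] [Ring A] [Algebra k A] [Ring B] [Algebra k B]
  [AddCommGroup V] [Module k V] {maC : ModuleAlgebra k H C} {maA : ModuleAlgebra k H A}
  {maB : ModuleAlgebra k H B} {ιA : A →ₐ[k] C} {ιB : B →ₐ[k] C}

theorem mul'_map_algHom {A' : Type} [Ring A'] [Algebra k A'] (i : A' →ₐ[k] C)
    (u : A' ⊗[k] A') :
    mul' k C (TensorProduct.map i.toLinearMap i.toLinearMap u) = i (mul' k A' u) := by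
  induction u using TensorProduct.induction_on with
  | zero => simp
  | add u₁ u₂ h₁ h₂ => simp only [map_add, h₁, h₂]
  | tmul a a' => simp

theorem twistedMul_map_algHom (hAeq : ∀ (h : H) (a : A), ιA (maA.act h a) = maC.act h (ιA a))
    (Finv : H ⊗[k] H) (u : A ⊗[k] A) :
    twistedMul maC Finv (TensorProduct.map ιA.toLinearMap ιA.toLinearMap u) =
      ιA (twistedMul maA Finv u) := by
  rw [maC.twistedMul_eq, ← map_legHom maA.actHom maA.actHom (f' := maC.actHom)
    (g' := maC.actHom) (fun h a => hAeq h a) (fun h a => hAeq h a), mul'_map_algHom]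
  rfl

theorem resMul_legHom (hAeq : ∀ (h : H) (a : A), ιA (maA.act h a) = maC.act h (ιA a))
    (hBeq : ∀ (h : H) (b : B), ιB (maB.act h b) = maC.act h (ιB b))
    (x : H ⊗[k] H) (z : A ⊗[k] B) :
    resMul ιA.toLinearMap ιB.toLinearMap (legHom maA.actHom maB.actHom x z) =
      mul' k C (legHom maC.actHom maC.actHom x
        (TensorProduct.map ιA.toLinearMap ιB.toLinearMap z)) := by
  rw [resMul, LinearMap.comp_apply, map_legHom maA.actHom maB.actHom (f' := maC.actHom)
    (g' := maC.actHom) (fun h a => hAeq h a) (fun h b => hBeq h b)]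

theorem ofBijective_resMul_symm_act
    (hAeq : ∀ (h : H) (a : A), ιA (maA.act h a) = maC.act h (ιA a))
    (hBeq : ∀ (h : H) (b : B), ιB (maB.act h b) = maC.act h (ιB b))
    (hbij : Function.Bijective (resMul ιA.toLinearMap ιB.toLinearMap)) (h : H) (w : C) :
    (LinearEquiv.ofBijective _ hbij).symm (maC.act h w) =
      legHom maA.actHom maB.actHom (Coalgebra.comul h)
        ((LinearEquiv.ofBijective _ hbij).symm w) := by
  rw [LinearEquiv.symm_apply_eq, LinearEquiv.ofBijective_apply, resMul_legHom hAeq hBeq,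
    maC.mul'_legHom_comul]
  congr
  exact ((LinearEquiv.ofBijective _ hbij).apply_symm_apply w).symm

theorem ofBijective_twistedMul_symm
    (hAeq : ∀ (h : H) (a : A), ιA (maA.act h a) = maC.act h (ιA a))
    (hBeq : ∀ (h : H) (b : B), ιB (maB.act h b) = maC.act h (ιB b))
    {F Finv : H ⊗[k] H} (hF : IsCocycle k H F Finv)
    (hbij : Function.Bijective (resMul ιA.toLinearMap ιB.toLinearMap))
    (hbijF : Function.Bijective (twistedMul maC Finv ∘ₗ
      TensorProduct.map ιA.toLinearMap ιB.toLinearMap)) (w : C) :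
    (LinearEquiv.ofBijective _ hbijF).symm w =
      legHom maA.actHom maB.actHom F ((LinearEquiv.ofBijective _ hbij).symm w) := by
  rw [LinearEquiv.symm_apply_eq, LinearEquiv.ofBijective_apply, LinearMap.comp_apply,
    maC.twistedMul_eq, ← resMul_legHom hAeq hBeq, ← Module.End.mul_apply, ← map_mul, hF.2.1,
    map_one, Module.End.one_apply]
  exact ((LinearEquiv.ofBijective _ hbij).apply_symm_apply w).symm

theorem legAct_diagAct_eq_legHom (ρ : AlgRep (k := k) H V) (x : H ⊗[k] H) :
    legAct maC.act (diagAct maA.act ρ.ρ) x = legHom maC.actHom (legHom maA.actHom ρ.toAlgHom)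
      (Algebra.TensorProduct.map (AlgHom.id k H) (Bialgebra.comulAlgHom k H) x) := by
  induction x using TensorProduct.induction_on with
  | zero => simp [legAct]
  | add x₁ x₂ h₁ h₂ => simp only [legAct, map_add] at h₁ h₂ ⊢; rw [h₁, h₂]
  | tmul h g => rfl

theorem legAct_diagAct_tmul_legAct (ρ : AlgRep (k := k) H V) {F Finv : H ⊗[k] H}
    (hF : IsCocycle k H F Finv) (c : C) (a : A) (v : V) :
    legAct maC.act (diagAct maA.act ρ.ρ) Finv (c ⊗ₜ legAct maA.act ρ.ρ Finv (a ⊗ₜ v)) =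
      TensorProduct.assoc k C A V (legHom (legHom maC.actHom maA.actHom) ρ.toAlgHom
        (Algebra.TensorProduct.map (Bialgebra.comulAlgHom k H) (AlgHom.id k H) Finv *
          (Finv ⊗ₜ 1)) ((c ⊗ₜ a) ⊗ₜ v)) := by
  rw [assoc_legHom_legHom, hF.map_comul_id_inv_mul, AlgEquiv.apply_symm_apply, map_mul,
    Module.End.mul_apply, legHom_one_tmul, TensorProduct.assoc_tmul, lTensor_tmul,
    legAct_diagAct_eq_legHom, legAct_eq_legHom]

theorem inducedAction_legAct_diagAct
    (hAeq : ∀ (h : H) (a : A), ιA (maA.act h a) = maC.act h (ιA a))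
    (hBeq : ∀ (h : H) (b : B), ιB (maB.act h b) = maC.act h (ιB b))
    (ρB : AlgRep (k := k) B V) (ρHV : AlgRep (k := k) H V)
    {F Finv : H ⊗[k] H} (hF : IsCocycle k H F Finv)
    (hbij : Function.Bijective (resMul ιA.toLinearMap ιB.toLinearMap)) (c : C) (a : A) (v : V) :
    inducedAction (LinearEquiv.ofBijective _ hbij).symm.toLinearMap
        ((LinearEquiv.ofBijective _ hbij).symm.toLinearMap ∘ₗ
          resMul ιB.toLinearMap ιA.toLinearMap)
        (mul' k A) (lift ρB.ρ)
        (legAct maC.act (diagAct maA.act ρHV.ρ) Finv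
          (c ⊗ₜ legAct maA.act ρHV.ρ Finv (a ⊗ₜ v))) =
      lTensorAssoc (lift ρB.ρ) (legHom (legHom maA.actHom maB.actHom) ρHV.toAlgHom
        (Algebra.TensorProduct.map (Bialgebra.comulAlgHom k H) (AlgHom.id k H) Finv)
        ((LinearEquiv.ofBijective _ hbij).symm (twistedMul maC Finv (c ⊗ₜ ιA a)) ⊗ₜ v)) := by
  set e := LinearEquiv.ofBijective _ hbij
  set ψ : C ⊗[k] A →ₗ[k] A ⊗[k] B :=
    e.symm.toLinearMap ∘ₗ mul' k C ∘ₗ lTensor C ιA.toLinearMap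
  have hιA : ∀ x u, lTensor C ιA.toLinearMap (legHom maC.actHom maA.actHom x u) =
      legHom maC.actHom maC.actHom x (lTensor C ιA.toLinearMap u) :=
    map_legHom _ _ (fun _ _ => rfl) (fun h a => hAeq h a)
  have hψ : ∀ h u, ψ (legHom maC.actHom maA.actHom (Coalgebra.comul h) u) =
      legHom maA.actHom maB.actHom (Coalgebra.comul h) (ψ u) := by
    intro h u
    simp only [ψ, LinearMap.comp_apply, hιA, maC.mul'_legHom_comul, LinearEquiv.coe_coe, e,
      ofBijective_resMul_symm_act hAeq hBeq]
  have hψV := map_legHom ((legHom maC.actHom maA.actHom).comp (Bialgebra.comulAlgHom k H))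
    ρHV.toAlgHom (f' := (legHom maA.actHom maB.actHom).comp (Bialgebra.comulAlgHom k H))
    (g' := ρHV.toAlgHom) (φ := ψ) (ψ := LinearMap.id) hψ (fun _ _ => rfl) Finv
  simp only [legHom_comp_left, AlgHom.comp_apply] at hψV
  have hind : ∀ t, inducedAction e.symm.toLinearMap
      (e.symm.toLinearMap ∘ₗ resMul ιB.toLinearMap ιA.toLinearMap) (mul' k A) (lift ρB.ρ)
      (TensorProduct.assoc k C A V t) = lTensorAssoc (lift ρB.ρ) (TensorProduct.map ψ id t) :=
    inducedAction_assoc (mC := mul' k C) (iB := ιB.toLinearMap) _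
      (fun x y z => by simp [mul_assoc]) (fun a a' => by simp) hbij
  rw [legAct_diagAct_tmul_legAct ρHV hF, hind, map_mul, Module.End.mul_apply, legHom_tmul_one,
    rTensor_tmul, hψV]
  simp only [map_tmul, ψ, LinearMap.comp_apply, hιA]
  rfl

end Factorisation

theorem twist_of_induced_module {C A B V : Type} [Ring C] [Algebra k C] [Ring A]
    [Algebra k A] [Ring B] [Algebra k B] [AddCommGroup V] [Module k V]
    (maC : ModuleAlgebra k H C) (maA : ModuleAlgebra k H A) (maB : ModuleAlgebra k H B)
    (ιA : A →ₐ[k] C) (ιB : B →ₐ[k] C)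
    (hAeq : ∀ (h : H) (a : A), ιA (maA.act h a) = maC.act h (ιA a))
    (hBeq : ∀ (h : H) (b : B), ιB (maB.act h b) = maC.act h (ιB b))
    (ρB : AlgRep (k := k) B V) (ρHV : AlgRep (k := k) H V)
    (hHB : IsHAModule maB ρB ρHV)
    (F Finv : H ⊗[k] H) (hF : IsCocycle k H F Finv)
    (hbij : Function.Bijective (resMul ιA.toLinearMap ιB.toLinearMap))
    (hbijF : Function.Bijective (twistedMul maC Finv ∘ₗ
      TensorProduct.map ιA.toLinearMap ιB.toLinearMap)) :
    Function.Bijective (legAct maA.act ρHV.ρ Finv : A ⊗[k] V →ₗ[k] A ⊗[k] V) ∧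
    ∀ (c : C) (x : A ⊗[k] V),
      legAct maA.act ρHV.ρ Finv
          (inducedAction
            (LinearEquiv.ofBijective
              (twistedMul maC Finv ∘ₗ TensorProduct.map ιA.toLinearMap ιB.toLinearMap)
              hbijF).symm.toLinearMap
            ((LinearEquiv.ofBijective
                (twistedMul maC Finv ∘ₗ TensorProduct.map ιA.toLinearMap ιB.toLinearMap)
                hbijF).symm.toLinearMap
              ∘ₗ (twistedMul maC Finv ∘ₗ TensorProduct.map ιB.toLinearMap ιA.toLinearMap))
            (twistedMul maA Finv)
            (TensorProduct.lift ρB.ρ ∘ₗ legAct maB.act ρHV.ρ Finv)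
            (c ⊗ₜ[k] x)) =
        inducedAction
          (LinearEquiv.ofBijective (resMul ιA.toLinearMap ιB.toLinearMap)
            hbij).symm.toLinearMap
          ((LinearEquiv.ofBijective (resMul ιA.toLinearMap ιB.toLinearMap)
              hbij).symm.toLinearMap ∘ₗ resMul ιB.toLinearMap ιA.toLinearMap)
          (LinearMap.mul' k A) (TensorProduct.lift ρB.ρ)
          (legAct maC.act (diagAct maA.act ρHV.ρ) Finv
            (c ⊗ₜ[k] legAct maA.act ρHV.ρ Finv x)) := by
  refine ⟨?_, fun c x => ?_⟩
  · rw [legAct_eq_legHom]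
    exact legHom_bijective _ _ hF.1 hF.2.1
  induction x using TensorProduct.induction_on with
  | zero => simp
  | add x₁ x₂ h₁ h₂ => simp only [tmul_add, map_add, h₁, h₂]
  | tmul a v =>
    rw [inducedAction_tmul_tmul _ (maC.twistedMul_assoc hF)
        (fun a a' => twistedMul_map_algHom hAeq Finv (a ⊗ₜ a')) hbijF,
      ofBijective_twistedMul_symm hAeq hBeq hF hbij,
      inducedAction_legAct_diagAct hAeq hBeq ρB ρHV hF hbij, legAct_eq_legHom,
      legHom_lTensorAssoc_twisted maA hHB hF]
    rfl

end
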